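/- arXiv:1511.00170 — 7 statements merged into one kernel-verified Lean document; each statement's English description precedes it below -/
import Mathlib

section
/- For positive integers n ≥ m₁ > m₂ > ... > m_l ≥ 1, the family q(n; m₁; ...; m_l) = C([n], m₁) ∪ C([m₁-1], m₂) ∪ ... ∪ C([m_{l-1}-1], m_l), where C(S, k) denotes the family of k-element subsets of S, is union-free. -/
/-- A family is union-free if no member equals the union of a nonempty
collection of other members. -/
def UnionFree (F : Finset (Finset ℕ)) : Prop :=
  ∀ A ∈ F, ∀ I ⊆ F.erase A, I.Nonempty → A ≠ I.sup id

/-- The family `q(n; m₀; …; m_{l-1}) = C([n], m₀) ∪ C([m₀-1], m₁) ∪ ⋯`,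
where the `i`-th block consists of the `m i`-element subsets of
`[n]` if `i = 0`, and of `[m (i-1) - 1]` otherwise. -/
def qFam (n l : ℕ) (m : ℕ → ℕ) : Finset (Finset ℕ) :=
  (Finset.range l).biUnion fun i =>
    Finset.powersetCard (m i) (Finset.Icc 1 (if i = 0 then n else m (i - 1) - 1))

theorem qFam_unionFree (n l : ℕ) (m : ℕ → ℕ) (hl : 1 ≤ l)
    (hm1 : m 0 ≤ n)
    (hdec : ∀ i, i + 1 < l → m (i + 1) < m i)
    (hpos : ∀ i < l, 1 ≤ m i) :
    UnionFree (qFam n l m) := by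
  have hanti : ∀ i j, i < j → j < l → m j < m i := by
    intro i j hij hjl
    induction j with
    | zero => omega
    | succ k ih =>
      rcases Nat.lt_succ_iff_lt_or_eq.mp hij with h | h
      · exact lt_trans (hdec k (by omega)) (ih h (by omega))
      · subst h; exact hdec i (by omega)
  intro A hA I hI hIne hAeq
  simp only [qFam, Finset.mem_biUnion, Finset.mem_range, Finset.mem_powersetCard] at hA
  obtain ⟨i, hil, hAsub, hAcard⟩ := hA
  have hApos : A.Nonempty := Finset.card_pos.mp (by rw [hAcard]; exact hpos i hil)
  set a := A.max' hApos with ha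
  have haA : a ∈ A := A.max'_mem hApos
  have hAIcc : A ⊆ Finset.Icc 1 a := by
    intro x hx
    rw [Finset.mem_Icc]
    exact ⟨(Finset.mem_Icc.mp (hAsub hx)).1, A.le_max' x hx⟩
  have hma : m i ≤ a := by
    have := Finset.card_le_card hAIcc
    rw [hAcard] at this
    simpa using this
  have haA' : a ∈ I.sup id := by rw [← hAeq]; exact haA
  obtain ⟨B, hBI, haB⟩ := Finset.mem_sup.mp haA'
  have hBne : B ≠ A := Finset.ne_of_mem_erase (hI hBI)
  have hBF : B ∈ qFam n l m := Finset.mem_of_mem_erase (hI hBI)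
  simp only [qFam, Finset.mem_biUnion, Finset.mem_range, Finset.mem_powersetCard] at hBF
  obtain ⟨j, hjl, hBsub, hBcard⟩ := hBF
  have hBA : B ⊆ A := by
    rw [hAeq]
    exact Finset.le_sup (f := id) hBI
  have hcardBA : m j ≤ m i := by
    have := Finset.card_le_card hBA
    omega
  rcases lt_trichotomy i j with hij | hij | hij
  · -- j > i : elements of B are too small
    have hj0 : j ≠ 0 := by omega
    have hBsub' : B ⊆ Finset.Icc 1 (m (j - 1) - 1) := by
      simpa [hj0] using hBsub
    have haub : a ≤ m (j - 1) - 1 := (Finset.mem_Icc.mp (hBsub' haB)).2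
    have hle : m (j - 1) ≤ m i := by
      rcases eq_or_lt_of_le (Nat.le_sub_one_of_lt hij) with h | h
      · rw [← h]
      · exact le_of_lt (hanti i (j - 1) (by omega) (by omega))
    have := hpos i hil
    omega
  · -- j = i : B = A
    apply hBne
    apply Finset.eq_of_subset_of_card_le hBA
    rw [hAcard, hBcard, hij]
  · -- j < i : B too big
    have := hanti j i hij hil
    omega
end

section
/- Let n ≥ m₁ > m₂ > ... > m_l = 1 be positive integers and let F = q(n; m₁; ...; m_l) = C([n], m₁) ∪ C([m₁-1], m₂) ∪ ... ∪ C([m_{l-1}-1], m_l). Then for any integers s, t with 0 ≤ s < t ≤ n and any subset S ⊆ [n] with |S| = s, there exist sets A₁,...,A_k ∈ F such that |S ∪ A₁ ∪ ... ∪ A_k| = t. -/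
private lemma mem_qFam {n l : ℕ} {m : ℕ → ℕ} {A : Finset ℕ} {j : ℕ} (hj : j < l)
    (hsub : A ⊆ Finset.Icc 1 (if j = 0 then n else m (j - 1) - 1))
    (hcard : A.card = m j) : A ∈ qFam n l m := by
  simp only [qFam, Finset.mem_biUnion, Finset.mem_range, Finset.mem_powersetCard]
  exact ⟨j, hj, hsub, hcard⟩

private lemma qFam_aux (n l : ℕ) (m : ℕ → ℕ) (hl : 1 ≤ l) (hm1 : m 0 ≤ n)
    (hdec : ∀ i, i + 1 < l → m (i + 1) < m i) (hlast : m (l - 1) = 1)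
    (t : ℕ) (htn : t ≤ n) :
    ∀ d S, S ⊆ Finset.Icc 1 n → S.card < t → t - S.card ≤ d →
      ∃ I ⊆ qFam n l m, (S ∪ I.sup id).card = t := by
  classical
  have hmono : ∀ k, k < l → ∀ j, j ≤ k → m k ≤ m j := by
    intro k
    induction k with
    | zero =>
      intro _ j hj
      have : j = 0 := Nat.le_zero.mp hj
      simp [this]
    | succ k ih =>
      intro hk j hj
      rcases Nat.eq_or_lt_of_le hj with h | h
      · rw [h]
      · have h1 : m (k + 1) < m k := hdec k hk
        exact le_trans h1.le (ih (by omega) j (by omega))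
  intro d
  induction d with
  | zero => intro S _ h1 h2; omega
  | succ d ih =>
    intro S hSn hst hd
    set s := S.card with hs
    set M : ℕ → ℕ := fun j => if j = 0 then n else m (j - 1) - 1 with hM
    have hMn : ∀ k, k < l → M k ≤ n := by
      intro k hk
      by_cases hk0 : k = 0
      · simp [hM, hk0]
      · simp only [hM, if_neg hk0]
        have := hmono (k - 1) (by omega) 0 (Nat.zero_le _)
        omega
    have hex : ∃ j, m j ≤ (S ∩ Finset.Icc 1 (M j)).card + (t - s) := by
      refine ⟨l - 1, ?_⟩
      rw [hlast]
      omega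
    set j := Nat.find hex with hj
    have hPj : m j ≤ (S ∩ Finset.Icc 1 (M j)).card + (t - s) := Nat.find_spec hex
    have hjl : j < l := by
      have h1 : j ≤ l - 1 := Nat.find_min' hex (by rw [hlast]; omega)
      omega
    -- key counting fact
    have hcount : ∀ k, (Finset.Icc 1 (M k) \ S).card + (S ∩ Finset.Icc 1 (M k)).card = M k := by
      intro k
      have := Finset.card_sdiff_add_card_inter (Finset.Icc 1 (M k)) S
      rw [Finset.inter_comm] at this
      rwa [Nat.card_Icc, Nat.add_sub_cancel] at this
    have hcond2 : t - s ≤ (Finset.Icc 1 (M j) \ S).card := by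
      by_cases hj0 : j = 0
      · have hMn0 : M j = n := by simp [hM, hj0]
        have hSfull : S ∩ Finset.Icc 1 (M j) = S := by
          rw [hMn0]; exact Finset.inter_eq_left.mpr hSn
        have := hcount j
        rw [hSfull, hMn0] at this
        rw [hMn0]
        omega
      · have hfail := Nat.find_min hex (m := j - 1) (by omega)
        have hle : M j ≤ M (j - 1) := by
          by_cases h1 : j - 1 = 0
          · simp only [hM, if_neg hj0, h1, if_pos]
            omega
          · simp only [hM, if_neg hj0, if_neg h1]
            have := hdec (j - 1 - 1) (by omega)
            have hj1 : j - 1 - 1 + 1 = j - 1 := by omega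
            rw [hj1] at this
            omega
        have hcc : (S ∩ Finset.Icc 1 (M j)).card ≤ (S ∩ Finset.Icc 1 (M (j - 1))).card :=
          Finset.card_le_card (Finset.inter_subset_inter_left (Finset.Icc_subset_Icc_right hle))
        have hMj : M j = m (j - 1) - 1 := by simp [hM, hj0]
        have := hcount j
        omega
    by_cases hms : m j ≤ t - s
    · -- add a disjoint m j - set, recurse
      obtain ⟨A, hA1, hA2⟩ := Finset.exists_subset_card_eq (le_trans hms hcond2)
      have hAq : A ∈ qFam n l m := mem_qFam hjl (hA1.trans Finset.sdiff_subset) hA2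
      have hdisj : Disjoint S A := by
        rw [Finset.disjoint_right]
        intro a ha
        exact (Finset.mem_sdiff.mp (hA1 ha)).2
      have hcardSA : (S ∪ A).card = s + m j := by
        rw [Finset.card_union_of_disjoint hdisj, hA2]
      have hmj1 : 1 ≤ m j := by
        have := hmono (l - 1) (by omega) j (by omega)
        omega
      rcases eq_or_lt_of_le (show s + m j ≤ t by omega) with heq | hlt
      · refine ⟨{A}, by simpa using hAq, ?_⟩
        simp only [Finset.sup_singleton, id_eq]
        omega
      · have hsub' : S ∪ A ⊆ Finset.Icc 1 n := by
          refine Finset.union_subset hSn ((hA1.trans Finset.sdiff_subset).trans ?_)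
          exact Finset.Icc_subset_Icc_right (hMn j hjl)
        obtain ⟨I', hI'q, hI'⟩ := ih (S ∪ A) hsub' (by omega) (by omega)
        refine ⟨insert A I', Finset.insert_subset hAq hI'q, ?_⟩
        rw [Finset.sup_insert, id_eq,
          show S ∪ (A ⊔ I'.sup id) = (S ∪ A) ∪ I'.sup id by
            rw [Finset.sup_eq_union, Finset.union_assoc]]
        exact hI'
    · -- finish in one step
      have hb : m j - (t - s) ≤ (S ∩ Finset.Icc 1 (M j)).card := by omega
      obtain ⟨E, hE1, hE2⟩ := Finset.exists_subset_card_eq hb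
      obtain ⟨D, hD1, hD2⟩ := Finset.exists_subset_card_eq hcond2
      have hDS : Disjoint S D := by
        rw [Finset.disjoint_right]
        intro a ha
        exact (Finset.mem_sdiff.mp (hD1 ha)).2
      have hDE : Disjoint D E := by
        rw [Finset.disjoint_left]
        intro a haD haE
        exact (Finset.mem_sdiff.mp (hD1 haD)).2 (Finset.mem_inter.mp (hE1 haE)).1
      set A := D ∪ E with hA
      have hAcard : A.card = m j := by
        rw [hA, Finset.card_union_of_disjoint hDE, hD2, hE2]; omega
      have hAsub : A ⊆ Finset.Icc 1 (M j) :=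
        Finset.union_subset (hD1.trans Finset.sdiff_subset) (hE1.trans Finset.inter_subset_right)
      have hAq : A ∈ qFam n l m := mem_qFam hjl hAsub hAcard
      have hES : E ⊆ S := hE1.trans Finset.inter_subset_left
      have hSA : S ∪ A = S ∪ D := by
        rw [hA, ← Finset.union_assoc]
        exact Finset.union_eq_left.mpr (hES.trans Finset.subset_union_left)
      refine ⟨{A}, by simpa using hAq, ?_⟩
      simp only [Finset.sup_singleton, id_eq]
      rw [hSA, Finset.card_union_of_disjoint hDS, hD2]
      omega

theorem qFam_augment (n l : ℕ) (m : ℕ → ℕ) (hl : 1 ≤ l)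
    (hm1 : m 0 ≤ n)
    (hdec : ∀ i, i + 1 < l → m (i + 1) < m i)
    (hlast : m (l - 1) = 1)
    (s t : ℕ) (hst : s < t) (htn : t ≤ n)
    (S : Finset ℕ) (hS : S ⊆ Finset.Icc 1 n) (hcard : S.card = s) :
    ∃ I ⊆ qFam n l m, (S ∪ I.sup id).card = t := by
  exact qFam_aux n l m hl hm1 hdec hlast t htn (t - s) S hS (by omega) (by omega)
end

section
/- Let n ≥ m₁ > m₂ > ... > m_l = 1 be positive integers. Then the family F = q(n; m₁; ...; m_l) = C([n], m₁) ∪ C([m₁-1], m₂) ∪ ... ∪ C([m_{l-1}-1], m_l) is a maximal union-free family of non-empty subsets of [n]: for any non-empty subset S ⊆ [n] with S ∉ F, the family F ∪ {S} is not union-free. -/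
lemma mem_qFam_s4 {n l : ℕ} {m : ℕ → ℕ} {B : Finset ℕ} :
    B ∈ qFam n l m ↔
      ∃ i, i < l ∧ B.card = m i ∧
        B ⊆ Finset.Icc 1 (if i = 0 then n else m (i - 1) - 1) := by
  simp only [qFam, Finset.mem_biUnion, Finset.mem_range, Finset.mem_powersetCard]
  tauto

lemma sup_powersetCard (s : Finset ℕ) (t : ℕ) (h1 : 1 ≤ t) (h2 : t ≤ s.card) :
    (Finset.powersetCard t s).sup id = s := by
  apply le_antisymm
  · exact Finset.sup_le fun B hB => (Finset.mem_powersetCard.mp hB).1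
  · intro x hx
    obtain ⟨u, hu1, hu2, hu3⟩ := Finset.exists_subsuperset_card_eq
      (Finset.singleton_subset_iff.mpr hx) (by simpa using h1) h2
    exact Finset.mem_sup.mpr
      ⟨u, Finset.mem_powersetCard.mpr ⟨hu2, hu3⟩, hu1 (Finset.mem_singleton_self x)⟩

theorem qFam_maximal_unionFree (n l : ℕ) (m : ℕ → ℕ) (hl : 1 ≤ l)
    (hm1 : m 0 ≤ n)
    (hdec : ∀ i, i + 1 < l → m (i + 1) < m i)
    (hlast : m (l - 1) = 1) :
    UnionFree (qFam n l m) ∧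
      ∀ S : Finset ℕ, S ⊆ Finset.Icc 1 n → S.Nonempty → S ∉ qFam n l m →
        ¬ UnionFree (insert S (qFam n l m)) := by
  have hstrict : ∀ {i j}, i < j → j < l → m j < m i := by
    intro i j hij hjl
    induction j, hij using Nat.le_induction with
    | base => exact hdec i hjl
    | succ j hj ih => exact (hdec j hjl).trans (ih (Nat.lt_of_succ_lt hjl))
  have hmono : ∀ {i j}, i ≤ j → j < l → m j ≤ m i := by
    intro i j hij hjl
    rcases hij.lt_or_eq with h | h
    · exact (hstrict h hjl).le
    · rw [h]
  have hpos : ∀ i, i < l → 1 ≤ m i := by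
    intro i hi
    have := hmono (i := i) (j := l - 1) (by omega) (by omega)
    omega
  have hbound : ∀ i, i < l → m i ≤ (if i = 0 then n else m (i - 1) - 1) := by
    intro i hi
    rcases Nat.eq_zero_or_pos i with h | h
    · simpa [h] using hm1
    · have hlt : m i < m (i - 1) := hstrict (by omega) (by omega)
      rw [if_neg (by omega : ¬ i = 0)]
      omega
  constructor
  · -- union-freeness
    intro A hA I hI hne hAeq
    obtain ⟨i, hil, hAcard, hAsub⟩ := mem_qFam_s4.mp hA
    have hIsub : ∀ B ∈ I, B ⊆ Finset.Icc 1 (m i - 1) := by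
      intro B hB
      obtain ⟨hBA, hBF⟩ := Finset.mem_erase.mp (hI hB)
      obtain ⟨j, hjl, hBcard, hBsub⟩ := mem_qFam_s4.mp hBF
      have hBsubA : B ⊆ A := by
        have h := Finset.le_sup (f := id) hB
        rw [← hAeq] at h
        exact h
      have hcardle : m j ≤ m i := by
        rw [← hAcard, ← hBcard]
        exact Finset.card_le_card hBsubA
      rcases lt_trichotomy j i with h | h | h
      · exact absurd hcardle (not_le.mpr (hstrict h hil))
      · subst h
        exact absurd (Finset.eq_of_subset_of_card_le hBsubA (by omega)) hBA
      · rw [if_neg (by omega : ¬ j = 0)] at hBsub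
        have hji : m (j - 1) ≤ m i := hmono (by omega) (by omega)
        exact hBsub.trans (Finset.Icc_subset_Icc_right (by omega))
    have hsub : A ≤ Finset.Icc 1 (m i - 1) := by
      rw [hAeq]
      exact Finset.sup_le fun B hB => hIsub B hB
    have hcle := Finset.card_le_card hsub
    rw [hAcard, Nat.card_Icc] at hcle
    have := hpos i hil
    omega
  · -- maximality
    intro S hS hSne hSF hUF
    set k := Nat.findGreatest
      (fun i => S ⊆ Finset.Icc 1 (if i = 0 then n else m (i - 1) - 1)) (l - 1) with hk
    have hPk : S ⊆ Finset.Icc 1 (if k = 0 then n else m (k - 1) - 1) :=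
      Nat.findGreatest_spec
        (P := fun i => S ⊆ Finset.Icc 1 (if i = 0 then n else m (i - 1) - 1))
        (Nat.zero_le _) (by simpa using hS)
    have hkl : k ≤ l - 1 := Nat.findGreatest_le _
    have hmk1 : 1 ≤ m k := hpos k (by omega)
    have hScard1 : 1 ≤ S.card := Finset.card_pos.mpr hSne
    rcases lt_trichotomy S.card (m k) with hcard | hcard | hcard
    · -- main case: |S| < m k
      have hkl2 : k < l - 1 := by
        by_contra h
        have hkeq : k = l - 1 := by omega
        rw [hkeq, hlast] at hcard
        omega
      have hnotP : ¬ S ⊆ Finset.Icc 1 (m k - 1) := by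
        have h := Nat.findGreatest_is_greatest (P := fun i =>
            S ⊆ Finset.Icc 1 (if i = 0 then n else m (i - 1) - 1))
          (show k < k + 1 by omega) (by omega)
        simpa using h
      obtain ⟨x, hxS, hxnot⟩ := Finset.not_subset.mp hnotP
      have hxn : 1 ≤ x ∧ x ≤ n := Finset.mem_Icc.mp (hS hxS)
      have hxge : m k ≤ x := by
        rw [Finset.mem_Icc] at hxnot
        omega
      -- step bound for the discrete IVT
      have hf : ∀ r, (S ∪ Finset.Icc 1 (r + 1)).card ≤ (S ∪ Finset.Icc 1 r).card + 1 := by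
        intro r
        have hsub : S ∪ Finset.Icc 1 (r + 1) ⊆ insert (r + 1) (S ∪ Finset.Icc 1 r) := by
          intro y hy
          rcases Finset.mem_union.mp hy with h | h
          · exact Finset.mem_insert_of_mem (Finset.mem_union_left _ h)
          · rw [Finset.mem_Icc] at h
            rcases Nat.lt_or_ge y (r + 1) with h2 | h2
            · exact Finset.mem_insert_of_mem
                (Finset.mem_union_right _ (Finset.mem_Icc.mpr ⟨h.1, by omega⟩))
            · exact Finset.mem_insert.mpr (Or.inl (by omega))
        exact (Finset.card_le_card hsub).trans (Finset.card_insert_le _ _)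
      have hbig : m k ≤ (S ∪ Finset.Icc 1 (m k - 1)).card := by
        have hsub2 : insert x (Finset.Icc 1 (m k - 1)) ⊆ S ∪ Finset.Icc 1 (m k - 1) := by
          intro y hy
          rcases Finset.mem_insert.mp hy with h | h
          · rw [h]; exact Finset.mem_union_left _ hxS
          · exact Finset.mem_union_right _ h
        have hcard2 : (insert x (Finset.Icc 1 (m k - 1))).card = m k := by
          rw [Finset.card_insert_of_notMem hxnot, Nat.card_Icc]
          omega
        calc m k = _ := hcard2.symm
          _ ≤ _ := Finset.card_le_card hsub2
      have hIVT : ∃ r, r ≤ m k - 1 ∧ (S ∪ Finset.Icc 1 r).card = m k := by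
        have key : ∀ r, m k ≤ (S ∪ Finset.Icc 1 r).card →
            ∃ r', r' ≤ r ∧ (S ∪ Finset.Icc 1 r').card = m k := by
          intro r
          induction r with
          | zero =>
            intro h
            rw [Finset.Icc_eq_empty (by omega), Finset.union_empty] at h
            omega
          | succ r ih =>
            intro h
            rcases Nat.lt_or_ge (S ∪ Finset.Icc 1 r).card (m k) with h2 | h2
            · exact ⟨r + 1, le_rfl, by have := hf r; omega⟩
            · obtain ⟨r', hr'1, hr'2⟩ := ih h2
              exact ⟨r', hr'1.trans (Nat.le_succ r), hr'2⟩
        exact key (m k - 1) hbig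
      obtain ⟨r, hrle, hrcard⟩ := hIVT
      have hr1 : 1 ≤ r := by
        rcases Nat.eq_zero_or_pos r with h | h
        · rw [h, Finset.Icc_eq_empty (by omega), Finset.union_empty] at hrcard
          omega
        · exact h
      -- minimal j > k with m j ≤ r
      have hQex : ∃ j, k < j ∧ j < l ∧ m j ≤ r :=
        ⟨l - 1, by omega, by omega, by rw [hlast]; exact hr1⟩
      obtain ⟨hkj, hjl, hmjr⟩ := Nat.find_spec hQex
      set j := Nat.find hQex with hj
      have hrlt : r < m (j - 1) := by
        rcases Nat.eq_or_lt_of_le (Nat.succ_le_of_lt hkj) with h | h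
        · have hje : j - 1 = k := by omega
          rw [hje]
          omega
        · by_contra hcon
          exact Nat.find_min hQex (show j - 1 < j by omega) ⟨by omega, by omega, by omega⟩
      set A := S ∪ Finset.Icc 1 r with hA
      have hAcard : A.card = m k := hrcard
      have hAF : A ∈ qFam n l m := by
        refine mem_qFam_s4.mpr ⟨k, by omega, hAcard, ?_⟩
        refine Finset.union_subset hPk ?_
        have hb := hbound k (by omega)
        exact Finset.Icc_subset_Icc_right (le_trans (by omega) hb)
      set J := Finset.powersetCard (m j) (Finset.Icc 1 r) with hJ
      have hsupJ : J.sup id = Finset.Icc 1 r := by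
        apply sup_powersetCard
        · exact hpos j hjl
        · rw [Nat.card_Icc]; omega
      have hSA : S ≠ A := by
        intro h
        rw [← h] at hAcard
        omega
      have hIsub : insert S J ⊆ (insert S (qFam n l m)).erase A := by
        intro B hB
        rw [Finset.mem_erase]
        rcases Finset.mem_insert.mp hB with h | h
        · rw [h]
          exact ⟨hSA, Finset.mem_insert_self _ _⟩
        · rw [hJ, Finset.mem_powersetCard] at h
          refine ⟨?_, Finset.mem_insert_of_mem (mem_qFam_s4.mpr ⟨j, hjl, h.2, ?_⟩)⟩
          · intro hBA
            have h2 := h.2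
            rw [hBA, hAcard] at h2
            omega
          · rw [if_neg (by omega : ¬ j = 0)]
            exact h.1.trans (Finset.Icc_subset_Icc_right (by omega))
      have hsupI : (insert S J).sup id = A := by
        rw [Finset.sup_insert, hsupJ, hA]
        simp [Finset.sup_eq_union]
      exact hUF A (Finset.mem_insert_of_mem hAF) (insert S J) hIsub
        ⟨S, Finset.mem_insert_self _ _⟩ hsupI.symm
    · -- |S| = m k : S would be in the family
      exact hSF (mem_qFam_s4.mpr ⟨k, by omega, hcard, hPk⟩)
    · -- |S| > m k : S is a union of its (m k)-subsets
      have hne : (S.powersetCard (m k)).Nonempty :=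
        Finset.powersetCard_nonempty.mpr hcard.le
      have hsub : S.powersetCard (m k) ⊆ (insert S (qFam n l m)).erase S := by
        intro B hB
        rw [Finset.mem_powersetCard] at hB
        rw [Finset.mem_erase]
        refine ⟨?_, Finset.mem_insert_of_mem
          (mem_qFam_s4.mpr ⟨k, by omega, hB.2, hB.1.trans hPk⟩)⟩
        intro h
        rw [h] at hB
        omega
      exact hUF S (Finset.mem_insert_self _ _) _ hsub hne
        (sup_powersetCard S (m k) hmk1 hcard.le).symm
end

section
/- Let M(n) be the maximum size of a union-free family of non-empty subsets of [n]. For any positive integers n₁, n₂ with n = n₁ + n₂, we have M(n) ≤ M(n₁) + 2^{n₁} · M(n₂). -/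
/-- `M n` is the maximum size of a union-free family of non-empty subsets
of `[n] = {1, …, n}`. -/
noncomputable def M (n : ℕ) : ℕ :=
  sSup {k | ∃ F : Finset (Finset ℕ),
    (∀ A ∈ F, A ⊆ Finset.Icc 1 n ∧ A.Nonempty) ∧ UnionFree F ∧ F.card = k}

lemma unionFree_subset {F F' : Finset (Finset ℕ)} (h : F' ⊆ F) (hF : UnionFree F) :
    UnionFree F' := fun A hA I hI hne =>
  hF A (h hA) I (hI.trans (Finset.erase_subset_erase _ h)) hne

lemma le_M {n : ℕ} {F : Finset (Finset ℕ)}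
    (hF : ∀ A ∈ F, A ⊆ Finset.Icc 1 n ∧ A.Nonempty) (hUF : UnionFree F) :
    F.card ≤ M n := by
  apply le_csSup
  · refine ⟨2 ^ n, ?_⟩
    rintro k ⟨G, hG, -, rfl⟩
    calc G.card ≤ (Finset.Icc 1 n).powerset.card :=
          Finset.card_le_card (fun A hA => Finset.mem_powerset.2 (hG A hA).1)
      _ = 2 ^ n := by simp [Nat.card_Icc]
  · exact ⟨F, hF, hUF, rfl⟩

lemma image_sub_add {n₁ : ℕ} {B : Finset ℕ} (h : ∀ x ∈ B, n₁ < x) :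
    (B.image (· - n₁)).image (· + n₁) = B := by
  rw [Finset.image_image]
  have h2 : ∀ x ∈ B, (fun x => x - n₁ + n₁) x = id x := by
    intro x hx; exact Nat.sub_add_cancel (h x hx).le
  rw [show ((fun x => x + n₁) ∘ fun x => x - n₁) = fun x => x - n₁ + n₁ from rfl]
  rw [Finset.image_congr h2, Finset.image_id]

lemma image_sub_subset {n₁ : ℕ} {B C : Finset ℕ} (hB : ∀ x ∈ B, n₁ < x)
    (hC : ∀ x ∈ C, n₁ < x) (h : B.image (· - n₁) ⊆ C.image (· - n₁)) : B ⊆ C := by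
  have := Finset.image_subset_image (f := (· + n₁)) h
  rwa [image_sub_add hB, image_sub_add hC] at this

theorem M_subadditive (n n₁ n₂ : ℕ) (h₁ : 0 < n₁) (h₂ : 0 < n₂)
    (hn : n = n₁ + n₂) : M n ≤ M n₁ + 2 ^ n₁ * M n₂ := by
  have h0 : ∃ F : Finset (Finset ℕ),
      (∀ A ∈ F, A ⊆ Finset.Icc 1 n ∧ A.Nonempty) ∧ UnionFree F ∧ F.card = 0 :=
    ⟨∅, by simp, fun A hA => absurd hA (by simp), rfl⟩
  rw [M]
  refine csSup_le ⟨(0:ℕ), h0⟩ ?_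
  rintro k ⟨F, hF, hUF, rfl⟩
  set K : Finset ℕ := Finset.Icc 1 n₁ with hK
  -- general facts
  have hgt : ∀ A ∈ F, ∀ x ∈ A \ K, n₁ < x := by
    intro A hA x hx
    rw [Finset.mem_sdiff] at hx
    have h1 := (hF A hA).1 hx.1
    rw [Finset.mem_Icc] at h1
    have := hx.2
    rw [hK, Finset.mem_Icc] at this
    omega
  have hdec : ∀ A : Finset ℕ, A = (A ∩ K) ∪ (A \ K) := by
    intro A; ext x
    simp only [Finset.mem_union, Finset.mem_inter, Finset.mem_sdiff]
    tauto
  -- split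
  rw [← Finset.card_filter_add_card_filter_not (p := fun A => A ⊆ K) (s := F)]
  gcongr
  · -- first part: ≤ M n₁
    apply le_M (n := n₁)
    · intro A hA
      rw [Finset.mem_filter] at hA
      exact ⟨hA.2, (hF A hA.1).2⟩
    · exact unionFree_subset (Finset.filter_subset _ _) hUF
  · -- second part
    set F₁ := F.filter (fun A => ¬ A ⊆ K) with hF₁
    have hF₁F : F₁ ⊆ F := Finset.filter_subset _ _
    rw [Finset.card_eq_sum_card_fiberwise
      (f := fun A => A ∩ K) (t := K.powerset)
      (fun A _ => Finset.mem_powerset.2 Finset.inter_subset_right)]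
    have hbound : ∀ S ∈ K.powerset,
        (F₁.filter (fun A => A ∩ K = S)).card ≤ M n₂ := by
      intro S hS
      set G := F₁.filter (fun A => A ∩ K = S) with hG
      have hGF : G ⊆ F := (Finset.filter_subset _ _).trans hF₁F
      have hGS : ∀ A ∈ G, A ∩ K = S := fun A hA => (Finset.mem_filter.1 hA).2
      have hGgt : ∀ A ∈ G, ∀ x ∈ A \ K, n₁ < x := fun A hA => hgt A (hGF hA)
      set e : Finset ℕ → Finset ℕ := fun B => (B \ K).image (· - n₁) with he
      have e_inj : ∀ A ∈ G, ∀ B ∈ G, e A = e B → A = B := by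
        intro A hA B hB hAB
        have h1 : (e A).image (· + n₁) = A \ K := image_sub_add (hGgt A hA)
        have h2 : (e B).image (· + n₁) = B \ K := image_sub_add (hGgt B hB)
        have h3 : A \ K = B \ K := by rw [← h1, ← h2, hAB]
        rw [hdec A, hdec B, hGS A hA, hGS B hB, h3]
      rw [← Finset.card_image_of_injOn (f := e) (fun A hA B hB => e_inj A hA B hB)]
      apply le_M (n := n₂)
      · -- subsets of Icc 1 n₂ and nonempty
        intro A' hA'
        obtain ⟨A, hA, rfl⟩ := Finset.mem_image.1 hA'
        constructor
        · intro y hy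
          obtain ⟨x, hx, rfl⟩ := Finset.mem_image.1 hy
          have hx1 := hGgt A hA x hx
          have hx2 : x ≤ n := by
            have := (hF A (hGF hA)).1 (Finset.mem_sdiff.1 hx).1
            rw [Finset.mem_Icc] at this; exact this.2
          rw [Finset.mem_Icc]; omega
        · have hns : ¬ A ⊆ K := (Finset.mem_filter.1 (Finset.mem_filter.1 hA).1).2
          obtain ⟨x, hxA, hxK⟩ := Finset.not_subset.1 hns
          exact ⟨x - n₁, Finset.mem_image.2 ⟨x, Finset.mem_sdiff.2 ⟨hxA, hxK⟩, rfl⟩⟩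
      · -- union-free
        intro A' hA' I hI hne heq
        obtain ⟨A, hAG, rfl⟩ := Finset.mem_image.1 hA'
        set J := G.filter (fun B => B ≠ A ∧ e B ∈ I) with hJ
        have hmemJ : ∀ B' ∈ I, ∃ B ∈ J, e B = B' := by
          intro B' hB'
          have hB'2 := hI hB'
          rw [Finset.mem_erase] at hB'2
          obtain ⟨B, hBG, rfl⟩ := Finset.mem_image.1 hB'2.2
          refine ⟨B, Finset.mem_filter.2 ⟨hBG, ?_, hB'⟩, rfl⟩
          intro hBA; exact hB'2.1 (by rw [hBA])
        have hJne : J.Nonempty := by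
          obtain ⟨B', hB'⟩ := hne
          obtain ⟨B, hB, -⟩ := hmemJ B' hB'
          exact ⟨B, hB⟩
        have hJF : J ⊆ F.erase A := by
          intro B hB
          rw [hJ, Finset.mem_filter] at hB
          exact Finset.mem_erase.2 ⟨hB.2.1, hGF hB.1⟩
        refine hUF A (hGF hAG) J hJF hJne ?_
        apply Finset.Subset.antisymm
        · -- A ⊆ J.sup id
          intro x hxA
          rw [Finset.mem_sup]
          by_cases hxK : x ∈ K
          · obtain ⟨B₀, hB₀⟩ := hJne
            refine ⟨B₀, hB₀, ?_⟩
            have hB₀G : B₀ ∈ G := Finset.mem_of_mem_filter _ hB₀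
            have : x ∈ B₀ ∩ K := by
              rw [hGS B₀ hB₀G, ← hGS A hAG]
              exact Finset.mem_inter.2 ⟨hxA, hxK⟩
            exact (Finset.mem_inter.1 this).1
          · have hxs : x ∈ A \ K := Finset.mem_sdiff.2 ⟨hxA, hxK⟩
            have hx' : x - n₁ ∈ I.sup id := by
              rw [← heq]; exact Finset.mem_image.2 ⟨x, hxs, rfl⟩
            rw [Finset.mem_sup] at hx'
            obtain ⟨B', hB', hxB'⟩ := hx'
            obtain ⟨B, hBJ, rfl⟩ := hmemJ B' hB'
            refine ⟨B, hBJ, ?_⟩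
            simp only [id] at hxB'
            obtain ⟨y, hy, hyx⟩ := Finset.mem_image.1 hxB'
            have hBG : B ∈ G := Finset.mem_of_mem_filter _ hBJ
            have hy1 := hGgt B hBG y hy
            have hx1 := hGgt A hAG x hxs
            have : y = x := by omega
            rw [← this]
            exact (Finset.mem_sdiff.1 hy).1
        · -- J.sup id ⊆ A
          show J.sup id ≤ A
          refine Finset.sup_le fun B hB => ?_
          show B ⊆ A
          rw [hJ, Finset.mem_filter] at hB
          obtain ⟨hBG, hBA, hBI⟩ := hB
          have hsub : e B ⊆ e A := by
            rw [heq]; exact Finset.le_sup (f := id) hBI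
          have hsd : B \ K ⊆ A \ K :=
            image_sub_subset (hGgt B hBG) (hGgt A hAG) hsub
          intro x hxB
          rcases Finset.mem_union.1 ((hdec B ▸ hxB : x ∈ (B ∩ K) ∪ (B \ K))) with h | h
          · have : x ∈ A ∩ K := by
              rw [hGS A hAG, ← hGS B hBG]; exact h
            exact (Finset.mem_inter.1 this).1
          · exact (Finset.mem_sdiff.1 (hsd h)).1
    calc (∑ S ∈ K.powerset, (F₁.filter (fun A => A ∩ K = S)).card)
        ≤ ∑ S ∈ K.powerset, M n₂ := Finset.sum_le_sum hbound
      _ = 2 ^ n₁ * M n₂ := by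
          rw [Finset.sum_const, Finset.card_powerset, Nat.card_Icc]
          simp [Nat.smul_one_eq_cast]
end

section
/- Let M(n) be the maximum size of a union-free family of non-empty subsets of [n]. Then for all positive integers c and k, M(ck) ≤ (2^{ck} − 1) · M(k) / (2^k − 1). -/
/-!
Split `[a + b]` into `[a]` and the shifted copy `a + [b]`. Members of a union-free family on
`[a + b]` lying inside `[a]` form a union-free family on `[a]`. The other members are sorted by
their trace `S ⊆ [a]`; within one class, `A ↦ A \ S` (shifted down by `a`) is injective and
reflects unions, because `S ∪ ·` commutes with nonempty unions, so each class contributes at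
most `M b`. This gives `M (a + b) ≤ M a + 2 ^ a * M b`, and induction on `c` with `a = c * k`,
`b = k` gives the bound, starting from `M 0 = 0`.
-/

open Finset

theorem UnionFree.mono {F G : Finset (Finset ℕ)} (hF : UnionFree F) (hGF : G ⊆ F) :
    UnionFree G := fun A hA I hI ↦ hF A (hGF hA) I (hI.trans (erase_subset_erase _ hGF))

theorem UnionFree.image {C : Finset (Finset ℕ)} (hC : UnionFree C) {f g : Finset ℕ → Finset ℕ}
    (hgf : Set.LeftInvOn g f C)
    (hg : ∀ I : Finset (Finset ℕ), I.Nonempty → g (I.sup id) = I.sup g) :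
    UnionFree (C.image f) := by
  rintro _ hT I hI hIne heq
  obtain ⟨A, hA, rfl⟩ := mem_image.1 hT
  set J := C.filter (f · ∈ I)
  have hJA : J ⊆ C.erase A := by
    intro B hB
    rw [mem_filter] at hB
    refine mem_erase.2 ⟨?_, hB.1⟩
    rintro rfl
    exact (mem_erase.1 (hI hB.2)).1 rfl
  have hJI : J.image f = I := by
    ext U
    simp only [mem_image, mem_filter, J]
    constructor
    · rintro ⟨B, ⟨-, hB⟩, rfl⟩
      exact hB
    · intro hU
      obtain ⟨B, hB, rfl⟩ := mem_image.1 (mem_of_mem_erase (hI hU))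
      exact ⟨B, ⟨hB, hU⟩, rfl⟩
  refine hC A hA J hJA (by rw [← hJI] at hIne; exact image_nonempty.1 hIne) ?_
  calc A = g (f A) := (hgf hA).symm
    _ = (J.image f).sup g := by rw [heq, hg I hIne, hJI]
    _ = J.sup id := by
      rw [sup_image]
      exact sup_congr rfl fun B hB ↦ hgf (mem_of_mem_erase (hJA hB))

theorem M_set_bddAbove (n : ℕ) : BddAbove {k | ∃ F : Finset (Finset ℕ),
    (∀ A ∈ F, A ⊆ Icc 1 n ∧ A.Nonempty) ∧ UnionFree F ∧ F.card = k} := by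
  refine ⟨2 ^ n, ?_⟩
  rintro _ ⟨F, hF, -, rfl⟩
  calc F.card ≤ (Icc 1 n).powerset.card :=
        card_le_card fun A hA ↦ mem_powerset.2 (hF A hA).1
    _ = 2 ^ n := by simp

theorem card_le_M {n : ℕ} {F : Finset (Finset ℕ)}
    (hF : ∀ A ∈ F, A ⊆ Icc 1 n ∧ A.Nonempty) (hUF : UnionFree F) : F.card ≤ M n :=
  le_csSup (M_set_bddAbove n) ⟨F, hF, hUF, rfl⟩

theorem exists_card_eq_M (n : ℕ) : ∃ F : Finset (Finset ℕ),
    (∀ A ∈ F, A ⊆ Icc 1 n ∧ A.Nonempty) ∧ UnionFree F ∧ F.card = M n := by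
  refine Nat.sSup_mem ⟨0, ?_⟩ (M_set_bddAbove n)
  exact ⟨∅, by simp, fun A hA ↦ absurd hA (notMem_empty A), card_empty⟩

theorem M_zero : M 0 = 0 := by
  obtain ⟨F, hF, -, hcard⟩ := exists_card_eq_M 0
  rw [← hcard, card_eq_zero, eq_empty_iff_forall_notMem]
  intro A hA
  obtain ⟨hA0, x, hx⟩ := hF A hA
  simpa using hA0 hx

theorem card_le_M_of_filter_le_eq {a b : ℕ} {S : Finset ℕ} {C : Finset (Finset ℕ)}
    (hC : ∀ A ∈ C, A ⊆ Icc 1 (a + b) ∧ (A.filter (a < ·)).Nonempty ∧ A.filter (· ≤ a) = S)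
    (hUF : UnionFree C) : C.card ≤ M b := by
  set f : Finset ℕ → Finset ℕ := fun A ↦ (A.filter (a < ·)).image (· - a)
  set g : Finset ℕ → Finset ℕ := fun T ↦ S ∪ T.image (· + a)
  have hgf : Set.LeftInvOn g f C := by
    intro A hA
    obtain ⟨-, -, hS⟩ := hC A hA
    ext x
    simp only [f, g, ← hS, image_image, mem_union, mem_filter, mem_image, Function.comp]
    constructor
    · rintro (⟨hx, -⟩ | ⟨y, ⟨hy, hay⟩, rfl⟩)
      · exact hx
      · rwa [Nat.sub_add_cancel hay.le]
    · intro hx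
      by_cases hxa : x ≤ a
      · exact Or.inl ⟨hx, hxa⟩
      · exact Or.inr ⟨x, ⟨hx, by omega⟩, by omega⟩
  have hg : ∀ I : Finset (Finset ℕ), I.Nonempty → g (I.sup id) = I.sup g := by
    intro I ⟨T₀, hT₀⟩
    ext x
    simp only [g, mem_union, mem_image, mem_sup, id]
    aesop
  rw [← card_image_of_injOn hgf.injOn]
  refine card_le_M (fun T hT ↦ ?_) (hUF.image hgf hg)
  obtain ⟨A, hA, rfl⟩ := mem_image.1 hT
  obtain ⟨hAab, hhigh, -⟩ := hC A hA
  refine ⟨fun y hy ↦ ?_, hhigh.image _⟩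
  obtain ⟨x, hx, rfl⟩ := mem_image.1 hy
  rw [mem_filter] at hx
  have := mem_Icc.1 (hAab hx.1)
  exact mem_Icc.2 ⟨by omega, by omega⟩

theorem M_add_le (a b : ℕ) : M (a + b) ≤ M a + 2 ^ a * M b := by
  obtain ⟨F, hF, hUF, hcard⟩ := exists_card_eq_M (a + b)
  set high := F.filter fun A ↦ (A.filter (a < ·)).Nonempty
  rw [← hcard, ← card_filter_add_card_filter_not (fun A ↦ (A.filter (a < ·)).Nonempty), add_comm]
  gcongr
  · refine card_le_M (fun A hA ↦ ?_) (hUF.mono (filter_subset _ _))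
    obtain ⟨hAF, hlow⟩ := mem_filter.1 hA
    rw [not_nonempty_iff_eq_empty, filter_eq_empty_iff] at hlow
    refine ⟨fun x hx ↦ ?_, (hF A hAF).2⟩
    have := mem_Icc.1 ((hF A hAF).1 hx)
    exact mem_Icc.2 ⟨this.1, not_lt.1 (hlow hx)⟩
  · calc high.card
        = ∑ S ∈ (Icc 1 a).powerset, (high.filter (fun A ↦ A.filter (· ≤ a) = S)).card := by
          refine card_eq_sum_card_fiberwise fun A hA ↦ mem_powerset.2 fun x hx ↦ ?_
          obtain ⟨hx, hxa⟩ := mem_filter.1 hx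
          have := mem_Icc.1 ((hF A (mem_filter.1 hA).1).1 hx)
          exact mem_Icc.2 ⟨this.1, hxa⟩
      _ ≤ ∑ S ∈ (Icc 1 a).powerset, M b := by
          refine sum_le_sum fun S _ ↦ card_le_M_of_filter_le_eq (a := a) (S := S) (fun A hA ↦ ?_)
            (hUF.mono ((filter_subset _ _).trans (filter_subset _ _)))
          obtain ⟨⟨hAF, hhigh⟩, hS⟩ := mem_filter.1 hA |>.imp_left mem_filter.1
          exact ⟨(hF A hAF).1, hhigh, hS⟩
      _ = 2 ^ a * M b := by simp

/-- `M(ck) ≤ (2^{ck} - 1) · M(k) / (2^k - 1)` in cross-multiplied form, avoiding `ℕ` division. -/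
theorem M_mul_bound_general (c k : ℕ) :
    (2 ^ k - 1) * M (c * k) ≤ (2 ^ (c * k) - 1) * M k := by
  induction c with
  | zero => simp [M_zero]
  | succ c ih =>
    have hpow : 2 ^ (c * k) - 1 + (2 ^ k - 1) * 2 ^ (c * k) = 2 ^ ((c + 1) * k) - 1 := by
      have h₁ : 1 ≤ 2 ^ k := Nat.one_le_two_pow
      have h₂ : 1 ≤ 2 ^ (c * k) := Nat.one_le_two_pow
      have h₃ : 1 ≤ 2 ^ (c * k) * 2 ^ k := Nat.one_le_iff_ne_zero.2 (by positivity)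
      rw [add_mul, one_mul, pow_add]
      zify [h₁, h₂, h₃]
      ring
    calc (2 ^ k - 1) * M ((c + 1) * k)
        ≤ (2 ^ k - 1) * (M (c * k) + 2 ^ (c * k) * M k) := by
          rw [add_mul, one_mul]
          gcongr
          exact M_add_le _ _
      _ = (2 ^ k - 1) * M (c * k) + (2 ^ k - 1) * 2 ^ (c * k) * M k := by ring
      _ ≤ (2 ^ (c * k) - 1) * M k + (2 ^ k - 1) * 2 ^ (c * k) * M k := by gcongr
      _ = (2 ^ ((c + 1) * k) - 1) * M k := by rw [← add_mul, hpow]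

/-- `M(ck) ≤ (2^{ck} - 1) · M(k) / (2^k - 1)`, stated in the equivalent
cross-multiplied form since `2^k - 1 > 0`. -/
theorem M_mul_bound (c k : ℕ) (hc : 0 < c) (hk : 0 < k) :
    (2 ^ k - 1) * M (c * k) ≤ (2 ^ (c * k) - 1) * M k :=
  M_mul_bound_general c k
end

section
/- Let n, m₁, h₁, ..., m_l, h_l be nonnegative integers with n ≥ m₁ + h₁ ≥ m₁ > m₂ + h₂ ≥ m₂ > ... > m_l + h_l ≥ m_l ≥ 1, and let F₁, ..., F_l be union-free families (possibly containing ∅) with F₁ consisting of subsets of [n−h₁+1, n] and F_j consisting of subsets of [m_{j-1} − h_j, m_{j-1} − 1] for j ≥ 2. Then the family (C([n−h₁], m₁) ⊕ F₁) ∪ (C([m₁−h₂−1], m₂) ⊕ F₂) ∪ ... ∪ (C([m_{l-1}−h_l−1], m_l) ⊕ F_l) is union-free. -/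
/-- `F ⊕ G = {A ∪ B : A ∈ F, B ∈ G}`. -/
def oplus (F G : Finset (Finset ℕ)) : Finset (Finset ℕ) :=
  Finset.image₂ (· ∪ ·) F G

/-- The cushioned family
`(C([n−h₀], m₀) ⊕ F₀) ∪ (C([m₀−h₁−1], m₁) ⊕ F₁) ∪ ⋯`. -/
def qCushion (n l : ℕ) (m h : ℕ → ℕ) (F : ℕ → Finset (Finset ℕ)) :
    Finset (Finset ℕ) :=
  (Finset.range l).biUnion fun j =>
    oplus (Finset.powersetCard (m j)
      (Finset.Icc 1 (if j = 0 then n - h 0 else m (j - 1) - h j - 1))) (F j)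

/-- threshold of block `j` -/
def cB (n : ℕ) (m h : ℕ → ℕ) (j : ℕ) : ℕ :=
  if j = 0 then n - h 0 else m (j - 1) - h j - 1

/-- upper bound of block `j` -/
def uB (n : ℕ) (m : ℕ → ℕ) (j : ℕ) : ℕ :=
  if j = 0 then n else m (j - 1) - 1

lemma mem_qCushion {n l : ℕ} {m h : ℕ → ℕ} {F : ℕ → Finset (Finset ℕ)}
    {X : Finset ℕ} :
    X ∈ qCushion n l m h F ↔
      ∃ j < l, ∃ S, S ⊆ Finset.Icc 1 (cB n m h j) ∧ S.card = m j ∧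
        ∃ B ∈ F j, X = S ∪ B := by
  simp only [qCushion, cB, Finset.mem_biUnion, Finset.mem_range, oplus,
    Finset.mem_image₂, Finset.mem_powersetCard]
  constructor
  · rintro ⟨j, hj, S, ⟨hS1, hS2⟩, B, hB, rfl⟩
    exact ⟨j, hj, S, hS1, hS2, B, hB, rfl⟩
  · rintro ⟨j, hj, S, hS1, hS2, B, hB, rfl⟩
    exact ⟨j, hj, S, ⟨hS1, hS2⟩, B, hB, rfl⟩

lemma filter_sup_comm (I : Finset (Finset ℕ)) (p : ℕ → Prop) [DecidablePred p] :
    (I.sup id).filter p = I.sup (fun X => X.filter p) := by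
  ext a
  simp only [Finset.mem_filter, Finset.mem_sup, id]
  tauto

theorem qCushion_unionFree (n l : ℕ) (m h : ℕ → ℕ)
    (F : ℕ → Finset (Finset ℕ)) (hl : 1 ≤ l)
    (h0 : m 0 + h 0 ≤ n)
    (hchain : ∀ j, j + 1 < l → m (j + 1) + h (j + 1) < m j)
    (hpos : ∀ j < l, 1 ≤ m j)
    (hFuf : ∀ j < l, UnionFree (F j))
    (hF0 : ∀ B ∈ F 0, B ⊆ Finset.Icc (n - h 0 + 1) n)
    (hFj : ∀ j, 1 ≤ j → j < l →
      ∀ B ∈ F j, B ⊆ Finset.Icc (m (j - 1) - h j) (m (j - 1) - 1)) :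
    UnionFree (qCushion n l m h F) := by
  -- monotonicity of m
  have hstep : ∀ j, j + 1 < l → m (j + 1) < m j := fun j hj =>
    lt_of_le_of_lt (Nat.le_add_right _ _) (hchain j hj)
  have hmono : ∀ j k, k ≤ j → j < l → m j ≤ m k := by
    intro j
    induction j with
    | zero =>
      intro k hk _
      obtain rfl : k = 0 := Nat.le_zero.mp hk
      exact le_rfl
    | succ j ih =>
      intro k hk hjl
      rcases Nat.eq_or_lt_of_le hk with rfl | hk'
      · exact le_rfl
      · exact le_trans (le_of_lt (hstep j hjl))
          (ih k (Nat.lt_succ_iff.mp hk') (by omega))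
  -- bounds on elements of B-parts
  have hBbound : ∀ j < l, ∀ B ∈ F j, ∀ b ∈ B, cB n m h j < b ∧ b ≤ uB n m j := by
    intro j hj B hB b hb
    rcases Nat.eq_zero_or_pos j with rfl | hj1
    · have := hF0 B hB hb
      rw [Finset.mem_Icc] at this
      simp only [cB, uB, reduceIte]
      omega
    · have := hFj j hj1 hj B hB hb
      rw [Finset.mem_Icc] at this
      have hch : m j + h j < m (j - 1) := by
        have := hchain (j - 1) (by omega)
        have hjj : j - 1 + 1 = j := by omega
        rwa [hjj] at this
      have := hpos j hj
      simp only [cB, uB, if_neg (by omega : ¬ j = 0)]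
      omega
  have hcu : ∀ j < l, cB n m h j ≤ uB n m j := by
    intro j hj
    rcases Nat.eq_zero_or_pos j with rfl | hj1
    · simp only [cB, uB, reduceIte]; omega
    · simp only [cB, uB, if_neg (by omega : ¬ j = 0)]; omega
  -- block decomposition
  have hdec : ∀ j < l, ∀ S B : Finset ℕ, S ⊆ Finset.Icc 1 (cB n m h j) →
      S.card = m j → B ∈ F j →
      (S ∪ B).filter (fun a => a ≤ cB n m h j) = S ∧
      (S ∪ B).filter (fun a => cB n m h j < a) = B ∧
      (S ∪ B) ⊆ Finset.Icc 1 (uB n m j) := by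
    intro j hj S B hS hScard hB
    have hSel : ∀ a ∈ S, 1 ≤ a ∧ a ≤ cB n m h j := by
      intro a ha
      have := hS ha
      rwa [Finset.mem_Icc] at this
    have hBel := hBbound j hj B hB
    refine ⟨?_, ?_, ?_⟩
    · ext a
      simp only [Finset.mem_filter, Finset.mem_union]
      constructor
      · rintro ⟨hab | hab, hle⟩
        · exact hab
        · exact absurd hle (by have := hBel a hab; omega)
      · intro ha
        exact ⟨Or.inl ha, (hSel a ha).2⟩
    · ext a
      simp only [Finset.mem_filter, Finset.mem_union]
      constructor
      · rintro ⟨hab | hab, hle⟩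
        · exact absurd hle (by have := hSel a hab; omega)
        · exact hab
      · intro ha
        exact ⟨Or.inr ha, (hBel a ha).1⟩
    · intro a ha
      rw [Finset.mem_union] at ha
      rw [Finset.mem_Icc]
      rcases ha with ha | ha
      · have := hSel a ha
        have := hcu j hj
        omega
      · have := hBel a ha
        omega
  -- main argument
  intro A hA I hI hne hAeq
  rw [mem_qCushion] at hA
  obtain ⟨j, hj, S, hS, hScard, B, hB, rfl⟩ := hA
  obtain ⟨hlo, hhi, hbnd⟩ := hdec j hj S B hS hScard hB
  set A := S ∪ B with hAdef
  have hcj_ge : m j ≤ cB n m h j := by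
    have := Finset.card_le_card hS
    rwa [hScard, Nat.card_Icc, Nat.add_sub_cancel] at this
  -- every X in I is a subset of A
  have hsubA : ∀ X ∈ I, X ⊆ A := by
    intro X hX
    have : id X ≤ I.sup id := Finset.le_sup hX
    rw [← hAeq] at this
    exact this
  have hXne : ∀ X ∈ I, X ≠ A ∧ X ∈ qCushion n l m h F := by
    intro X hX
    have := hI hX
    rw [Finset.mem_erase] at this
    exact this
  -- a member of block k has card ≥ m k
  have hcard_ge : ∀ k < l, ∀ X ∈ qCushion n l m h F, True := fun _ _ _ _ => trivial
  -- no X in I belongs to a block k < j, and X not in block j ⟹ X ⊆ [1, m j - 1]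
  have hdich : ∀ X ∈ I, (∃ S' B', S' ⊆ Finset.Icc 1 (cB n m h j) ∧ S'.card = m j ∧
      B' ∈ F j ∧ X = S' ∪ B') ∨ X ⊆ Finset.Icc 1 (m j - 1) := by
    intro X hX
    obtain ⟨hXA, hXq⟩ := hXne X hX
    rw [mem_qCushion] at hXq
    obtain ⟨k, hk, Sk, hSk, hSkcard, Bk, hBk, rfl⟩ := hXq
    rcases lt_trichotomy k j with hkj | rfl | hkj
    · -- impossible: X too big
      exfalso
      have hj1 : 1 ≤ j := by omega
      have hAcard : A.card ≤ m (j - 1) - 1 := by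
        have := Finset.card_le_card hbnd
        rwa [Nat.card_Icc, Nat.add_sub_cancel, uB, if_neg (by omega : ¬ j = 0)] at this
      have hXcard : m k ≤ (Sk ∪ Bk).card := by
        rw [← hSkcard]
        exact Finset.card_le_card Finset.subset_union_left
      have hXAc : (Sk ∪ Bk).card ≤ A.card :=
        Finset.card_le_card (hsubA _ hX)
      have h1 : m (j - 1) ≤ m k := hmono (j - 1) k (by omega) (by omega)
      have h2 : 1 ≤ m (j - 1) := hpos (j - 1) (by omega)
      omega
    · exact Or.inl ⟨Sk, Bk, hSk, hSkcard, hBk, rfl⟩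
    · -- later block: everything ≤ m j - 1
      right
      obtain ⟨_, _, hbk⟩ := hdec k hk Sk Bk hSk hSkcard hBk
      have hk1 : 1 ≤ k := by omega
      have hub : uB n m k ≤ m j - 1 := by
        have : m (k - 1) ≤ m j := hmono (k - 1) j (by omega) (by omega)
        simp only [uB, if_neg (by omega : ¬ k = 0)]
        omega
      intro a ha
      have := hbk ha
      rw [Finset.mem_Icc] at this ⊢
      omega
  classical
  set J := I.filter (fun X => ∃ S' B', S' ⊆ Finset.Icc 1 (cB n m h j) ∧
      S'.card = m j ∧ B' ∈ F j ∧ X = S' ∪ B') with hJ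
  rcases J.eq_empty_or_nonempty with hJe | hJne
  · -- all members in later blocks: A ⊆ [1, m j - 1], contradiction with |S| = m j
    have hAsub : A ⊆ Finset.Icc 1 (m j - 1) := by
      rw [hAeq]
      rw [← Finset.le_iff_subset]
      apply Finset.sup_le
      intro X hX
      rcases hdich X hX with hb | hb
      · exfalso
        have : X ∈ J := by
          rw [hJ, Finset.mem_filter]
          exact ⟨hX, hb⟩
        rw [hJe] at this
        exact absurd this (Finset.notMem_empty X)
      · exact hb
    have hc1 : S.card ≤ (Finset.Icc 1 (m j - 1)).card :=
      Finset.card_le_card (fun a ha => hAsub (Finset.mem_union_left _ ha))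
    rw [hScard, Nat.card_Icc, Nat.add_sub_cancel] at hc1
    have := hpos j hj
    omega
  · -- B is a union of other members of F j
    set G := J.image (fun X => X.filter (fun a => cB n m h j < a)) with hG
    have hlow : ∀ X ∈ J, X.filter (fun a => a ≤ cB n m h j) = S ∧
        X.filter (fun a => cB n m h j < a) ∈ F j ∧
        X.filter (fun a => cB n m h j < a) ≠ B := by
      intro X hXJ
      rw [hJ, Finset.mem_filter] at hXJ
      obtain ⟨hXI, S', B', hS', hS'card, hB', rfl⟩ := hXJ
      obtain ⟨hlo', hhi', _⟩ := hdec j hj S' B' hS' hS'card hB'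
      have hX_sub : S' ∪ B' ⊆ A := hsubA _ hXI
      have hlo_sub : (S' ∪ B').filter (fun a => a ≤ cB n m h j) ⊆ S := by
        rw [← hlo]
        exact Finset.filter_subset_filter _ hX_sub
      rw [hlo'] at hlo_sub
      have hS'eq : S' = S :=
        Finset.eq_of_subset_of_card_le hlo_sub (by rw [hS'card, hScard])
      subst hS'eq
      refine ⟨by rw [hlo'], by rw [hhi']; exact hB', ?_⟩
      rw [hhi']
      intro hcon
      subst hcon
      exact (hXne _ hXI).1 rfl
    have hGsub : G ⊆ (F j).erase B := by
      intro Bx hBx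
      rw [hG, Finset.mem_image] at hBx
      obtain ⟨X, hXJ, rfl⟩ := hBx
      obtain ⟨_, h1, h2⟩ := hlow X hXJ
      exact Finset.mem_erase.mpr ⟨h2, h1⟩
    have hGne : G.Nonempty := hJne.image _
    -- B = G.sup id
    have hBeq : B = G.sup id := by
      have e1 : B = A.filter (fun a => cB n m h j < a) := hhi.symm
      have e2 : A.filter (fun a => cB n m h j < a)
          = I.sup (fun X => X.filter (fun a => cB n m h j < a)) := by
        rw [hAeq]; exact filter_sup_comm I _
      have e3 : I.sup (fun X => X.filter (fun a => cB n m h j < a))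
          = J.sup (fun X => X.filter (fun a => cB n m h j < a)) := by
        apply le_antisymm
        · apply Finset.sup_le
          intro X hX
          by_cases hXJ : X ∈ J
          · exact Finset.le_sup hXJ
          · have : X ⊆ Finset.Icc 1 (m j - 1) := by
              rcases hdich X hX with hb | hb
              · exact absurd (by rw [hJ, Finset.mem_filter]; exact ⟨hX, hb⟩) hXJ
              · exact hb
            have : X.filter (fun a => cB n m h j < a) = ∅ := by
              apply Finset.filter_false_of_mem
              intro a ha
              have := this ha
              rw [Finset.mem_Icc] at this
              omega
            rw [this]
            exact bot_le
        · exact Finset.sup_mono (Finset.filter_subset _ _)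
      have e4 : J.sup (fun X => X.filter (fun a => cB n m h j < a)) = G.sup id := by
        rw [hG, Finset.sup_image]
        rfl
      rw [e1, e2, e3, e4]
    exact hFuf j hj B hB G hGsub hGne hBeq
end

section
/- For positive even integers n, every antichain F of subsets of [n] of maximum cardinality C(n, n/2) equals C([n], n/2), the family of all n/2-element subsets of [n]. -/
/-!
The LYM inequality gives `∑_{A ∈ F} 1 / C(n, |A|) ≤ 1` for an antichain `F`. For even `n` the
middle binomial coefficient `C(n, n/2)` strictly exceeds every other `C(n, r)`, so an antichain of
size `C(n, n/2)` can only contain `n/2`-sets, and there are exactly `C(n, n/2)` of those.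
-/

open Finset

namespace Nat

theorem choose_lt_succ_of_two_mul_add_one_lt {n r : ℕ} (h : 2 * r + 1 < n) :
    n.choose r < n.choose (r + 1) := by
  have hpos : 0 < n.choose r := choose_pos (by omega)
  refine Nat.lt_of_mul_lt_mul_right (a := r + 1) ?_
  rw [choose_succ_right_eq]
  exact Nat.mul_lt_mul_of_pos_left (by omega) hpos

theorem choose_lt_middle_of_even {n r : ℕ} (hn : Even n) (hr : r ≤ n) (hne : r ≠ n / 2) :
    n.choose r < n.choose (n / 2) := by
  obtain ⟨m, rfl⟩ := hn
  wlog hlt : r < m generalizing r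
  · rw [← choose_symm hr]
    exact this (by omega) (by omega) (by omega)
  calc (m + m).choose r < (m + m).choose (r + 1) :=
        choose_lt_succ_of_two_mul_add_one_lt (by omega)
    _ ≤ (m + m).choose ((m + m) / 2) := choose_le_middle _ _

end Nat

namespace IsAntichain

variable {α : Type*}

theorem sized_of_card_eq_choose_middle [Fintype α] {𝒜 : Finset (Finset α)}
    (h𝒜 : IsAntichain (· ⊆ ·) (𝒜 : Set (Finset α))) (hα : Even (Fintype.card α))
    (hcard : #𝒜 = (Fintype.card α).choose (Fintype.card α / 2)) :
    (𝒜 : Set (Finset α)).Sized (Fintype.card α / 2) := by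
  set n := Fintype.card α
  by_contra! hsized
  obtain ⟨s, hs, hne⟩ : ∃ s ∈ 𝒜, #s ≠ n / 2 := by simpa [Set.Sized] using hsized
  have hmid : (0 : ℚ) < n.choose (n / 2) := mod_cast Nat.choose_pos (Nat.div_le_self _ _)
  have hlt : (#𝒜 : ℚ) * (n.choose (n / 2) : ℚ)⁻¹ < 1 := calc
    _ = ∑ t ∈ 𝒜, (n.choose (n / 2) : ℚ)⁻¹ := by simp
    _ < ∑ t ∈ 𝒜, (n.choose #t : ℚ)⁻¹ := by
      refine sum_lt_sum (fun t _ => ?_) ⟨s, hs, ?_⟩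
      · gcongr
        · exact mod_cast Nat.choose_pos t.card_le_univ
        · exact Nat.choose_le_middle _ _
      · gcongr
        · exact mod_cast Nat.choose_pos s.card_le_univ
        · exact Nat.choose_lt_middle_of_even hα s.card_le_univ hne
    _ ≤ 1 := lubell_yamamoto_meshalkin_inequality_sum_inv_choose h𝒜
  rw [hcard, mul_inv_cancel₀ hmid.ne'] at hlt
  exact hlt.false

theorem eq_powersetCard_of_card_eq_choose_middle [Fintype α] {𝒜 : Finset (Finset α)}
    (h𝒜 : IsAntichain (· ⊆ ·) (𝒜 : Set (Finset α))) (hα : Even (Fintype.card α))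
    (hcard : #𝒜 = (Fintype.card α).choose (Fintype.card α / 2)) :
    𝒜 = powersetCard (Fintype.card α / 2) univ := by
  refine eq_of_subset_of_card_le (fun s hs => ?_) ?_
  · exact mem_powersetCard_univ.2 (h𝒜.sized_of_card_eq_choose_middle hα hcard hs)
  · rw [card_powersetCard, card_univ, hcard]

theorem eq_powersetCard_of_subset_powerset [DecidableEq α] {s : Finset α}
    {𝒜 : Finset (Finset α)} (h𝒜s : 𝒜 ⊆ s.powerset)
    (h𝒜 : IsAntichain (· ⊆ ·) (𝒜 : Set (Finset α))) (hs : Even #s)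
    (hcard : #𝒜 = (#s).choose (#s / 2)) :
    𝒜 = powersetCard (#s / 2) s := by
  set φ := mapEmbedding (Function.Embedding.subtype (· ∈ s))
  obtain ⟨ℬ, -, rfl⟩ : ∃ ℬ ⊆ univ, 𝒜 = ℬ.map φ.toEmbedding := by
    refine subset_map_iff.1 fun t ht => mem_map.2 ⟨t.subtype (· ∈ s), mem_univ _, ?_⟩
    exact subtype_map_of_mem fun x hx => mem_powerset.1 (h𝒜s ht) hx
  have hℬ : IsAntichain (· ⊆ ·) (ℬ : Set (Finset s)) := by
    rw [coe_map] at h𝒜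
    exact image_embedding_iff.1 h𝒜
  rw [card_map] at hcard
  rw [hℬ.eq_powersetCard_of_card_eq_choose_middle (by rwa [Fintype.card_coe])
    (by rwa [Fintype.card_coe]), Fintype.card_coe, ← powersetCard_map, univ_eq_attach,
    attach_map_val]

end IsAntichain

theorem sperner_uniqueness_even_general (n : ℕ) (heven : Even n)
    (F : Finset (Finset ℕ))
    (hsub : ∀ A ∈ F, A ⊆ Finset.Icc 1 n)
    (hA : IsAntichain (· ⊆ ·) (F : Set (Finset ℕ)))
    (hcard : F.card = n.choose (n / 2)) :
    F = Finset.powersetCard (n / 2) (Finset.Icc 1 n) := by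
  have hIcc : #(Icc 1 n) = n := by simp
  have h := hA.eq_powersetCard_of_subset_powerset (s := Icc 1 n)
    (fun A hAF => mem_powerset.2 (hsub A hAF)) (by rwa [hIcc]) (by rwa [hIcc])
  rwa [hIcc] at h

theorem sperner_uniqueness_even (n : ℕ) (hn : 0 < n) (heven : Even n)
    (F : Finset (Finset ℕ))
    (hsub : ∀ A ∈ F, A ⊆ Finset.Icc 1 n)
    (hA : IsAntichain (· ⊆ ·) (F : Set (Finset ℕ)))
    (hcard : F.card = n.choose (n / 2)) :
    F = Finset.powersetCard (n / 2) (Finset.Icc 1 n) :=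
  sperner_uniqueness_even_general n heven F hsub hA hcard
end
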